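/- arXiv:1211.0215 — 4 statements merged into one kernel-verified Lean document; each statement's English description precedes it below -/
import Mathlib

section
/- Let N = 3k and let U be a unitary on ℂ^N with U³ = I whose eigenspaces for eigenvalues 1, η, η² have dimensions k+1, k, k−1 respectively. Let ψ₀ be an eigenvector of U with eigenvalue 1, and let D₁,…,D_k be operators such that each D_j ψ₀, U D_j ψ₀, U² D_j ψ₀ is defined (i.e. k triplets). Then the 3k vectors {U^r D_j ψ₀ : 1 ≤ j ≤ k, 0 ≤ r ≤ 2} are linearly dependent. -/
/-- let `N = 3k`, `U` a unitary on `ℂ^N` with `U³ = I` whose eigenspaces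
for `1, η, η²` have dimensions `k+1, k, k−1`.  If `ψ₀` is an eigenvector of `U` with
eigenvalue `1` and `D₁, …, D_k` are operators, then the `3k` vectors
`U^r D_j ψ₀` (`1 ≤ j ≤ k`, `0 ≤ r ≤ 2`) are linearly dependent. -/
theorem triplets_linearly_dependent (k : ℕ) {V : Type*} [NormedAddCommGroup V]
    [InnerProductSpace ℂ V] [FiniteDimensional ℂ V]
    (hdim : Module.finrank ℂ V = 3 * k)
    (U : V →ₗ[ℂ] V) (hUunitary : LinearMap.adjoint U * U = 1) (hU3 : U ^ 3 = 1)
    (η : ℂ) (hη : η = Complex.exp (2 * Real.pi * Complex.I / 3))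
    (h1 : Module.finrank ℂ (Module.End.eigenspace U 1) = k + 1)
    (hη' : Module.finrank ℂ (Module.End.eigenspace U η) = k)
    (hη2 : Module.finrank ℂ (Module.End.eigenspace U (η ^ 2)) = k - 1)
    (ψ₀ : V) (hψ₀ : ψ₀ ≠ 0) (heig : U ψ₀ = ψ₀)
    (D : Fin k → (V →ₗ[ℂ] V)) :
    ¬ LinearIndependent ℂ (fun x : Fin k × Fin 3 => (U ^ (x.2 : ℕ)) (D x.1 ψ₀)) := by
  intro hLI
  rcases Nat.eq_zero_or_pos k with hk | hk
  · subst hk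
    have h0 : Module.finrank ℂ V = 0 := by simpa using hdim
    have : Subsingleton V := Module.finrank_zero_iff.mp h0
    exact hψ₀ (Subsingleton.elim _ _)
  · have hη3 : η ^ 3 = 1 := by
      rw [hη, ← Complex.exp_nat_mul]
      have h3 : (3 : ℕ) * (2 * (Real.pi : ℂ) * Complex.I / 3)
          = 2 * (Real.pi : ℂ) * Complex.I := by push_cast; ring
      rw [h3, Complex.exp_two_pi_mul_I]
    have hU3' : ∀ w : V, U (U (U w)) = w := by
      intro w
      have := congrArg (fun f : V →ₗ[ℂ] V => f w) hU3
      simpa [pow_succ, Module.End.mul_apply] using this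
    set v : Fin k → V := fun j => D j ψ₀ with hv
    set y : Fin k → V := fun j => v j + η • U (v j) + η ^ 2 • U (U (v j)) with hy
    have hmem : ∀ j, y j ∈ Module.End.eigenspace U (η ^ 2) := by
      intro j
      rw [Module.End.mem_eigenspace_iff]
      have e1 : η ^ 2 * η = 1 := by rw [← pow_succ]; exact hη3
      have e2 : η ^ 2 * η ^ 2 = η := by
        have : η ^ 2 * η ^ 2 = η ^ 3 * η := by ring
        rw [this, hη3, one_mul]
      simp only [hy, map_add, map_smul, smul_add, smul_smul, hU3', e1, e2, one_smul]
      abel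
    set E := Module.End.eigenspace U (η ^ 2)
    set yE : Fin k → E := fun j => ⟨y j, hmem j⟩ with hyE
    have hnotLI : ¬ LinearIndependent ℂ yE := by
      intro hli
      have := hli.fintype_card_le_finrank
      rw [hη2] at this
      simp only [Fintype.card_fin] at this
      omega
    rw [Fintype.not_linearIndependent_iff] at hnotLI
    obtain ⟨g, hg0, i, hgi⟩ := hnotLI
    have hsum : ∑ j, g j • y j = 0 := by
      have := congrArg (Subtype.val : E → V) hg0
      simpa [hyE] using this
    have hrel : ∑ x : Fin k × Fin 3, (g x.1 * η ^ (x.2 : ℕ)) •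
        (U ^ (x.2 : ℕ)) (D x.1 ψ₀) = 0 := by
      rw [Fintype.sum_prod_type]
      have : ∀ j : Fin k, ∑ r : Fin 3, (g j * η ^ (r : ℕ)) • (U ^ (r : ℕ)) (D j ψ₀)
          = g j • y j := by
        intro j
        rw [Fin.sum_univ_three]
        simp only [hy, hv, smul_add, smul_smul, pow_zero, pow_one, pow_succ,
          Module.End.mul_apply, Module.End.one_apply, mul_one, one_smul,
          Fin.isValue, Fin.val_zero, Fin.val_one, Fin.val_two, one_mul]
      rw [Finset.sum_congr rfl (fun j _ => this j), hsum]
    have := Fintype.linearIndependent_iff.mp hLI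
      (fun x : Fin k × Fin 3 => g x.1 * η ^ (x.2 : ℕ)) hrel (i, 0)
    simp at this
    exact hgi this
end

section
/- Let q be an odd prime and G ∈ SL(2, ℤ/qℤ) with G ≠ I. Then the number of points p ∈ (ℤ/qℤ)² such that p, Gp, …, G^{n−1}p are pairwise distinct (where n is the order of G) is at least q(q−1), i.e. at least q² − q. -/
section aux
variable {K : Type*} [Field K]

lemma fix_eq_one (v w : Fin 2 → K) (hD : v 0 * w 1 - w 0 * v 1 ≠ 0)
    (M : Matrix (Fin 2) (Fin 2) K) (hv : M.mulVec v = v) (hw : M.mulVec w = w) : M = 1 := by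
  have e1 := congrFun hv 0
  have e2 := congrFun hv 1
  have e3 := congrFun hw 0
  have e4 := congrFun hw 1
  simp [Matrix.mulVec, dotProduct, Fin.sum_univ_two] at e1 e2 e3 e4
  ext i j
  fin_cases i <;> fin_cases j <;>
    simp [Matrix.one_apply] <;>
    apply mul_right_cancel₀ hD
  · linear_combination w 1 * e1 - v 1 * e3
  · linear_combination v 0 * e3 - w 0 * e1
  · linear_combination w 1 * e2 - v 1 * e4
  · linear_combination v 0 * e4 - w 0 * e2

lemma dep_of_det_zero (v w : Fin 2 → K) (hv : v ≠ 0)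
    (hD : v 0 * w 1 - w 0 * v 1 = 0) : ∃ c : K, w = c • v := by
  have hv' : v 0 ≠ 0 ∨ v 1 ≠ 0 := by
    by_contra h
    push_neg at h
    exact hv (funext fun i => by fin_cases i <;> simp [h.1, h.2])
  rcases hv' with h | h
  · refine ⟨w 0 / v 0, funext fun i => ?_⟩
    fin_cases i
    · show w 0 = w 0 / v 0 * v 0
      field_simp
    · show w 1 = w 0 / v 0 * v 1
      rw [div_mul_eq_mul_div, eq_div_iff h]
      linear_combination hD
  · refine ⟨w 1 / v 1, funext fun i => ?_⟩
    fin_cases i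
    · show w 0 = w 1 / v 1 * v 0
      rw [div_mul_eq_mul_div, eq_div_iff h]
      linear_combination -hD
    · show w 1 = w 1 / v 1 * v 1
      field_simp

lemma eigen_pow (G : Matrix (Fin 2) (Fin 2) K) (p : Fin 2 → K) (c : K)
    (h : G.mulVec p = c • p) (k : ℕ) : (G ^ k).mulVec p = c ^ k • p := by
  induction k with
  | zero => simp
  | succ k ih =>
      rw [pow_succ', ← Matrix.mulVec_mulVec, ih, Matrix.mulVec_smul, h, pow_succ',
        smul_smul, mul_comm]

end aux

/-- for an odd prime `q` and `G ∈ SL(2, ℤ/qℤ)` with `G ≠ I` of order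
`n`, the number of points `p ∈ (ℤ/qℤ)²` such that `p, Gp, …, G^{n−1}p` are pairwise
distinct is at least `q² − q`. -/
theorem full_points_count (q : ℕ) (hq : q.Prime) (hodd : Odd q)
    (G : Matrix (Fin 2) (Fin 2) (ZMod q)) (hdet : G.det = 1) (hG : G ≠ 1) :
    q * q - q ≤
      {p : Fin 2 → ZMod q |
        Function.Injective fun i : Fin (orderOf G) => (G ^ (i : ℕ)).mulVec p}.ncard := by
  haveI : Fact q.Prime := ⟨hq⟩
  set n := orderOf G with hn
  have hunit : IsUnit G := (Matrix.isUnit_iff_isUnit_det G).2 (by simp [hdet])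
  have hnpos : 0 < n := by
    obtain ⟨u, rfl⟩ := hunit
    rw [hn, orderOf_units]
    exact orderOf_pos u
  have hn1 : n ≠ 1 := by
    simpa [hn, orderOf_eq_one_iff] using hG
  have hinj : ∀ k : ℕ, Function.Injective ((G ^ k).mulVec) := by
    intro k
    refine Matrix.mulVec_injective_iff_isUnit.2 ?_
    exact hunit.pow k
  -- bad points
  have hbad : ∀ p : Fin 2 → ZMod q,
      ¬ Function.Injective (fun i : Fin n => (G ^ (i : ℕ)).mulVec p) →
      ∃ k, 0 < k ∧ k < n ∧ (G ^ k).mulVec p = p := by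
    intro p hp
    obtain ⟨i, j, heq, hne⟩ := Function.not_injective_iff.1 hp
    have key : ∀ i j : Fin n, (i : ℕ) < (j : ℕ) →
        (G ^ (i : ℕ)).mulVec p = (G ^ (j : ℕ)).mulVec p →
        ∃ k, 0 < k ∧ k < n ∧ (G ^ k).mulVec p = p := by
      intro i j hij he
      refine ⟨(j : ℕ) - (i : ℕ), by omega, by have := j.2; omega, ?_⟩
      apply hinj (i : ℕ)
      rw [Matrix.mulVec_mulVec, ← pow_add]
      rw [Nat.add_sub_cancel' hij.le]
      exact he.symm
    rcases lt_trichotomy (i : ℕ) (j : ℕ) with h | h | h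
    · exact key i j h heq
    · exact absurd (Fin.ext h) hne
    · exact key j i h heq.symm
  -- eigenvector lemma
  have heig : ∀ p : Fin 2 → ZMod q, p ≠ 0 → ∀ k, 0 < k → k < n →
      (G ^ k).mulVec p = p → ∃ c : ZMod q, G.mulVec p = c • p := by
    intro p hp k hk hkn hfix
    by_contra hc
    push_neg at hc
    have hD : p 0 * (G.mulVec p) 1 - (G.mulVec p) 0 * p 1 ≠ 0 := by
      intro h
      obtain ⟨c, hcc⟩ := dep_of_det_zero p (G.mulVec p) hp h
      exact hc c hcc
    have hfix2 : (G ^ k).mulVec (G.mulVec p) = G.mulVec p := by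
      rw [Matrix.mulVec_mulVec, ← pow_succ, pow_succ', ← Matrix.mulVec_mulVec, hfix]
    have hone : G ^ k = 1 := fix_eq_one p (G.mulVec p) hD (G ^ k) hfix hfix2
    have hdvd : n ∣ k := orderOf_dvd_of_pow_eq_one hone
    have := Nat.le_of_dvd hk hdvd
    omega
  -- eigenvalue power is 1
  have hpow1 : ∀ (p : Fin 2 → ZMod q) (c : ZMod q), p ≠ 0 → ∀ k, 0 < k →
      (G ^ k).mulVec p = p → G.mulVec p = c • p → c ^ k = 1 := by
    intro p c hp k hk hfix he
    have h1 : c ^ k • p = p := by rw [← eigen_pow G p c he k, hfix]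
    have hp' : ∃ i, p i ≠ 0 := by
      by_contra h
      push_neg at h
      exact hp (funext fun i => h i)
    obtain ⟨i, hi⟩ := hp'
    have := congrFun h1 i
    simp only [Pi.smul_apply, smul_eq_mul] at this
    have : (c ^ k - 1) * p i = 0 := by linear_combination this
    rcases mul_eq_zero.1 this with h | h
    · exact sub_eq_zero.1 h
    · exact absurd h hi
  -- two bad nonzero points are dependent
  have hdep : ∀ p₁ p₂ : Fin 2 → ZMod q, p₁ ≠ 0 → p₂ ≠ 0 →
      (∃ k, 0 < k ∧ k < n ∧ (G ^ k).mulVec p₁ = p₁) →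
      (∃ k, 0 < k ∧ k < n ∧ (G ^ k).mulVec p₂ = p₂) →
      ∃ c : ZMod q, p₂ = c • p₁ := by
    intro p₁ p₂ hp₁ hp₂ ⟨k₁, hk₁, hk₁n, hfix₁⟩ ⟨k₂, hk₂, hk₂n, hfix₂⟩
    by_contra hc
    push_neg at hc
    have hD : p₁ 0 * p₂ 1 - p₂ 0 * p₁ 1 ≠ 0 := by
      intro h
      obtain ⟨c, hcc⟩ := dep_of_det_zero p₁ p₂ hp₁ h
      exact hc c hcc
    obtain ⟨c₁, he₁⟩ := heig p₁ hp₁ k₁ hk₁ hk₁n hfix₁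
    obtain ⟨c₂, he₂⟩ := heig p₂ hp₂ k₂ hk₂ hk₂n hfix₂
    have hc₁ : c₁ ^ k₁ = 1 := hpow1 p₁ c₁ hp₁ k₁ hk₁ hfix₁ he₁
    have hc₂ : c₂ ^ k₂ = 1 := hpow1 p₂ c₂ hp₂ k₂ hk₂ hfix₂ he₂
    -- determinant: c₁ * c₂ = 1
    have hprod : c₁ * c₂ = 1 := by
      have r₁ := congrFun he₁ 0
      have r₂ := congrFun he₁ 1
      have r₃ := congrFun he₂ 0
      have r₄ := congrFun he₂ 1
      simp only [Matrix.mulVec, dotProduct, Fin.sum_univ_two, Pi.smul_apply,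
        smul_eq_mul] at r₁ r₂ r₃ r₄
      have hd := hdet
      rw [Matrix.det_fin_two] at hd
      apply mul_right_cancel₀ hD
      rw [one_mul]
      linear_combination (-(G 1 0 * p₂ 0 + G 1 1 * p₂ 1)) * r₁ - (c₁ * p₁ 0) * r₄ +
        (G 0 0 * p₂ 0 + G 0 1 * p₂ 1) * r₂ + (c₁ * p₁ 1) * r₃ +
        (p₁ 0 * p₂ 1 - p₂ 0 * p₁ 1) * hd
    set g := Nat.gcd k₁ k₂ with hg
    have hgpos : 0 < g := Nat.gcd_pos_of_pos_left k₂ hk₁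
    have hc₁k₂ : c₁ ^ k₂ = 1 := by
      have : c₁ ^ k₂ * c₂ ^ k₂ = 1 := by rw [← mul_pow, hprod, one_pow]
      rw [hc₂, mul_one] at this
      exact this
    have hc₁g : c₁ ^ g = 1 := by
      have h1 : orderOf c₁ ∣ k₁ := orderOf_dvd_of_pow_eq_one hc₁
      have h2 : orderOf c₁ ∣ k₂ := orderOf_dvd_of_pow_eq_one hc₁k₂
      exact orderOf_dvd_iff_pow_eq_one.1 (Nat.dvd_gcd h1 h2)
    have hc₂g : c₂ ^ g = 1 := by
      have : c₁ ^ g * c₂ ^ g = 1 := by rw [← mul_pow, hprod, one_pow]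
      rw [hc₁g, one_mul] at this
      exact this
    have hf₁ : (G ^ g).mulVec p₁ = p₁ := by
      rw [eigen_pow G p₁ c₁ he₁ g, hc₁g, one_smul]
    have hf₂ : (G ^ g).mulVec p₂ = p₂ := by
      rw [eigen_pow G p₂ c₂ he₂ g, hc₂g, one_smul]
    have hone : G ^ g = 1 := fix_eq_one p₁ p₂ hD (G ^ g) hf₁ hf₂
    have hdvd : n ∣ g := orderOf_dvd_of_pow_eq_one hone
    have h1 := Nat.le_of_dvd hgpos hdvd
    have h2 : g ≤ k₁ := Nat.gcd_le_left k₂ hk₁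
    omega
  -- counting
  set S := {p : Fin 2 → ZMod q |
      Function.Injective fun i : Fin n => (G ^ (i : ℕ)).mulVec p} with hS
  have hqpos : 2 ≤ q := hq.two_le
  have hcompl : Sᶜ.ncard ≤ q := by
    by_cases hex : ∃ p ∈ Sᶜ, p ≠ 0
    · obtain ⟨p₀, hp₀S, hp₀⟩ := hex
      have hsub : Sᶜ ⊆ Set.range (fun c : ZMod q => c • p₀) := by
        intro p hp
        by_cases hp0 : p = 0
        · exact ⟨0, by simp [hp0]⟩
        · obtain ⟨c, hcc⟩ := hdep p₀ p hp₀ hp0 (hbad p₀ hp₀S) (hbad p hp)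
          exact ⟨c, hcc.symm⟩
      calc Sᶜ.ncard ≤ (Set.range (fun c : ZMod q => c • p₀)).ncard :=
            Set.ncard_le_ncard hsub (Set.finite_range _)
        _ ≤ Nat.card (ZMod q) := by
            rw [← Set.ncard_univ]
            rw [← Set.image_univ]
            exact Set.ncard_image_le Set.finite_univ
        _ = q := Nat.card_zmod q
    · push_neg at hex
      have hsub : Sᶜ ⊆ {0} := fun p hp => hex p hp
      calc Sᶜ.ncard ≤ ({0} : Set (Fin 2 → ZMod q)).ncard :=
            Set.ncard_le_ncard hsub (Set.finite_singleton _)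
        _ = 1 := Set.ncard_singleton _
        _ ≤ q := by omega
  have htotal : S.ncard + Sᶜ.ncard = q * q := by
    rw [Set.ncard_add_ncard_compl]
    rw [Nat.card_eq_fintype_card, Fintype.card_fun]
    simp [ZMod.card, sq]
  omega
end

section
/- Let N = q₁⋯q_u with the q_j distinct odd primes, and let G ∈ SL(2, ℤ/Nℤ) correspond under the CRT isomorphism to (G₁,…,G_u) with G_j of order n_j. Then the order n of G equals lcm(n₁,…,n_u), and if p ∈ (ℤ/Nℤ)² corresponds to (p₁,…,p_u) with each p_j G_j-full, then p is G-full (i.e. p, Gp, …, G^{n−1}p are pairwise distinct). Consequently the number of G-full points in (ℤ/Nℤ)² is at least N(q₁−1)⋯(q_u−1). -/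
set_option linter.unusedSectionVars false


open Matrix

namespace FPC

variable {R : Type*} [CommRing R] [Fintype R]

lemma mulVec_cancel (A : SpecialLinearGroup (Fin 2) R) {x y : Fin 2 → R}
    (h : (A : Matrix (Fin 2) (Fin 2) R).mulVec x = (A : Matrix (Fin 2) (Fin 2) R).mulVec y) :
    x = y := by
  have := congrArg (fun v => ((A⁻¹ : SpecialLinearGroup (Fin 2) R) : Matrix (Fin 2) (Fin 2) R).mulVec v) h
  simp only [Matrix.mulVec_mulVec, ← Matrix.SpecialLinearGroup.coe_mul, inv_mul_cancel,
    Matrix.SpecialLinearGroup.coe_one, Matrix.one_mulVec] at this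
  exact this

lemma pow_mulVec_add (A : SpecialLinearGroup (Fin 2) R) (a b : ℕ) (p : Fin 2 → R) :
    ((A ^ (a + b) : SpecialLinearGroup (Fin 2) R) : Matrix (Fin 2) (Fin 2) R).mulVec p =
      ((A ^ a : SpecialLinearGroup (Fin 2) R) : Matrix (Fin 2) (Fin 2) R).mulVec
        (((A ^ b : SpecialLinearGroup (Fin 2) R) : Matrix (Fin 2) (Fin 2) R).mulVec p) := by
  rw [Matrix.mulVec_mulVec, ← Matrix.SpecialLinearGroup.coe_mul, ← pow_add]

lemma fix_pow_mul (A : SpecialLinearGroup (Fin 2) R) {a : ℕ} {p : Fin 2 → R}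
    (h : ((A ^ a : SpecialLinearGroup (Fin 2) R) : Matrix (Fin 2) (Fin 2) R).mulVec p = p)
    (k : ℕ) :
    ((A ^ (a * k) : SpecialLinearGroup (Fin 2) R) : Matrix (Fin 2) (Fin 2) R).mulVec p = p := by
  induction k with
  | zero => simp
  | succ k ih =>
      have : a * (k + 1) = a * k + a := by ring
      rw [this, pow_mulVec_add, h, ih]

lemma fix_gcd (A : SpecialLinearGroup (Fin 2) R) :
    ∀ a b : ℕ, ∀ p : Fin 2 → R,
      ((A ^ a : SpecialLinearGroup (Fin 2) R) : Matrix (Fin 2) (Fin 2) R).mulVec p = p →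
      ((A ^ b : SpecialLinearGroup (Fin 2) R) : Matrix (Fin 2) (Fin 2) R).mulVec p = p →
      ((A ^ (Nat.gcd a b) : SpecialLinearGroup (Fin 2) R) : Matrix (Fin 2) (Fin 2) R).mulVec p = p := by
  intro a
  induction a using Nat.strong_induction_on with
  | _ a ih =>
    intro b p ha hb
    match a, ha with
    | 0, ha => simpa [Nat.gcd_zero_left] using hb
    | (a+1), ha =>
        rw [Nat.gcd_rec]
        have hmod : ((A ^ (b % (a+1)) : SpecialLinearGroup (Fin 2) R) : Matrix (Fin 2) (Fin 2) R).mulVec p = p := by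
          have hdiv : ((A ^ ((a+1) * (b / (a+1))) : SpecialLinearGroup (Fin 2) R) :
              Matrix (Fin 2) (Fin 2) R).mulVec p = p := fix_pow_mul A ha _
          have hb' : b = (a+1) * (b / (a+1)) + b % (a+1) := (Nat.div_add_mod b (a+1)).symm
          rw [hb', pow_mulVec_add] at hb
          exact mulVec_cancel (A ^ ((a+1) * (b / (a+1)))) (hb.trans hdiv.symm)
        exact ih _ (Nat.mod_lt _ (Nat.succ_pos a)) _ p hmod ha

end FPC

namespace FPC2

open FPC

variable {q : ℕ} [Fact q.Prime]

local notation "SL2" => SpecialLinearGroup (Fin 2) (ZMod q)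
local notation "M2" => Matrix (Fin 2) (Fin 2) (ZMod q)

lemma not_injective_iff (A : SL2) (p : Fin 2 → ZMod q) :
    ¬ (Function.Injective fun i : Fin (orderOf A) => ((A ^ (i : ℕ) : SL2) : M2).mulVec p) ↔
      ∃ k, 0 < k ∧ k < orderOf A ∧ ((A ^ k : SL2) : M2).mulVec p = p := by
  constructor
  · intro h
    rw [Function.not_injective_iff] at h
    obtain ⟨i, j, hij, hne⟩ := h
    have key : ∀ i j : Fin (orderOf A), (i : ℕ) < (j : ℕ) →
        ((A ^ (i : ℕ) : SL2) : M2).mulVec p = ((A ^ (j : ℕ) : SL2) : M2).mulVec p →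
        ∃ k, 0 < k ∧ k < orderOf A ∧ ((A ^ k : SL2) : M2).mulVec p = p := by
      intro i j hlt heq
      refine ⟨(j : ℕ) - i, by omega, by omega, ?_⟩
      have hj : (j : ℕ) = (i : ℕ) + ((j : ℕ) - (i : ℕ)) := by omega
      rw [hj, pow_mulVec_add] at heq
      exact (mulVec_cancel (A ^ (i : ℕ)) heq.symm)
    rcases lt_trichotomy (i : ℕ) (j : ℕ) with h | h | h
    · exact key i j h hij
    · exact absurd (Fin.ext h) hne
    · exact key j i h hij.symm
  · rintro ⟨k, hk0, hkn, hfix⟩ hinj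
    have : (⟨k, hkn⟩ : Fin (orderOf A)) = ⟨0, lt_of_le_of_lt (Nat.zero_le _) hkn⟩ := by
      apply hinj
      simpa using hfix
    have := congrArg Fin.val this
    simp at this
    omega

lemma sl2_entries (B : SL2) : (B : M2) 0 0 * (B : M2) 1 1 - (B : M2) 0 1 * (B : M2) 1 0 = 1 := by
  have := B.property
  rwa [Matrix.det_fin_two] at this

lemma unip (B : SL2) (hB : B ≠ 1) {p : Fin 2 → ZMod q} (hp : p ≠ 0)
    (hfix : (B : M2).mulVec p = p) {ℓ : ℕ} (hℓ : ℓ.Prime) (hBl : B ^ ℓ = 1) : ℓ = q := by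
  set M : M2 := (B : M2) - 1 with hM
  have hMne : M ≠ 0 := by
    intro h
    apply hB
    apply Subtype.ext
    have : (B : M2) = 1 := by rwa [hM, sub_eq_zero] at h
    simpa using this
  have hMp : M.mulVec p = 0 := by
    rw [hM, Matrix.sub_mulVec, hfix, Matrix.one_mulVec, sub_self]
  have hdet : M.det = 0 := by
    rw [← Matrix.exists_mulVec_eq_zero_iff]
    exact ⟨p, hp, hMp⟩
  have hdB := sl2_entries B
  have htr : (B : M2) 0 0 + (B : M2) 1 1 = 2 := by
    rw [Matrix.det_fin_two] at hdet
    simp only [hM, Matrix.sub_apply, Matrix.one_apply] at hdet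
    norm_num at hdet
    linear_combination hdB - hdet
  have hM2 : M * M = 0 := by
    ext i j
    simp only [Matrix.mul_apply, Fin.sum_univ_two, Matrix.zero_apply, hM, Matrix.sub_apply,
      Matrix.one_apply]
    fin_cases i <;> fin_cases j <;> norm_num
    · linear_combination ((B : M2) 0 0) * htr - hdB
    · linear_combination ((B : M2) 0 1) * htr
    · linear_combination ((B : M2) 1 0) * htr
    · linear_combination ((B : M2) 1 1) * htr - hdB
  have hBeq : (B : M2) = 1 + M := by rw [hM, add_comm, sub_add_cancel]
  have hpow : ∀ jj : ℕ, ((B ^ jj : SL2) : M2) = 1 + (jj : ZMod q) • M := by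
    intro jj
    induction jj with
    | zero => simp
    | succ j ih =>
        rw [pow_succ, Matrix.SpecialLinearGroup.coe_mul, ih, hBeq]
        have hstep : (1 + (j : ZMod q) • M) * (1 + M) = 1 + ((j : ZMod q) + 1) • M := by
          simp only [mul_add, add_mul, one_mul, mul_one, smul_mul_assoc, hM2, smul_zero,
            add_smul, one_smul, add_zero]
          abel
        rw [hstep, Nat.cast_add, Nat.cast_one]
  have hl0 : ((ℓ : ZMod q)) • M = 0 := by
    have h1 := hpow ℓ
    rw [hBl] at h1
    simp only [Matrix.SpecialLinearGroup.coe_one] at h1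
    have := h1.symm
    rwa [add_eq_left] at this
  have : (ℓ : ZMod q) = 0 := by
    rcases smul_eq_zero.mp hl0 with h | h
    · exact h
    · exact absurd h hMne
  have hq : q ∣ ℓ := (ZMod.natCast_eq_zero_iff ℓ q).mp this
  exact ((Nat.prime_dvd_prime_iff_eq (Fact.out : q.Prime) hℓ).mp hq).symm

lemma fixline (B : SL2) (hB : B ≠ 1) :
    {p : Fin 2 → ZMod q | (B : M2).mulVec p = p}.ncard ≤ q := by
  set M : M2 := (B : M2) - 1 with hM
  have hMne : M ≠ 0 := by
    intro h
    apply hB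
    apply Subtype.ext
    have : (B : M2) = 1 := by rwa [hM, sub_eq_zero] at h
    simpa using this
  have hset : {p : Fin 2 → ZMod q | (B : M2).mulVec p = p} =
      {p : Fin 2 → ZMod q | M.mulVec p = 0} := by
    ext p
    simp only [Set.mem_setOf_eq, hM, Matrix.sub_mulVec, Matrix.one_mulVec, sub_eq_zero]
  rw [hset]
  obtain ⟨i, j, hij⟩ : ∃ i j, M i j ≠ 0 := by
    by_contra h
    push_neg at h
    exact hMne (by ext i j; simpa using h i j)
  have hrow : ∀ p ∈ {p : Fin 2 → ZMod q | M.mulVec p = 0},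
      M i 0 * p 0 + M i 1 * p 1 = 0 := by
    intro p hp
    have := congrFun hp i
    simpa [Matrix.mulVec, dotProduct, Fin.sum_univ_two] using this
  have key : ∀ (f : (Fin 2 → ZMod q) → ZMod q),
      Set.InjOn f {p : Fin 2 → ZMod q | M.mulVec p = 0} →
      {p : Fin 2 → ZMod q | M.mulVec p = 0}.ncard ≤ q := by
    intro f hinj
    have := Set.ncard_le_ncard_of_injOn f (t := Set.univ)
      (fun a _ => Set.mem_univ _) hinj (Set.finite_univ)
    simpa [Set.ncard_univ, Nat.card_eq_fintype_card, ZMod.card] using this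
  have hpair : ∀ p p' : Fin 2 → ZMod q, p 0 = p' 0 → p 1 = p' 1 → p = p' := by
    intro p p' h0 h1
    funext l
    fin_cases l <;> assumption
  fin_cases j
  · -- M i 0 ≠ 0, inject via p ↦ p 1
    refine key (fun p => p 1) ?_
    intro p hp p' hp' hf
    have e1 := hrow p hp
    have e2 := hrow p' hp'
    simp only at hf
    rw [hf] at e1
    have : M i 0 * p 0 = M i 0 * p' 0 := by linear_combination e1 - e2
    exact hpair p p' (mul_left_cancel₀ hij this) hf
  · refine key (fun p => p 0) ?_
    intro p hp p' hp' hf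
    have e1 := hrow p hp
    have e2 := hrow p' hp'
    simp only at hf
    rw [hf] at e1
    have : M i 1 * p 1 = M i 1 * p' 1 := by linear_combination e1 - e2
    exact hpair p p' hf (mul_left_cancel₀ hij this)


lemma reduce (A : SL2) {p : Fin 2 → ZMod q} (hp : p ≠ 0) {k : ℕ}
    (hk0 : 0 < k) (hkn : k < orderOf A)
    (hfix : ((A ^ k : SL2) : M2).mulVec p = p) :
    q ∣ orderOf A ∧ ((A ^ (orderOf A / q) : SL2) : M2).mulVec p = p := by
  set n := orderOf A with hn
  have hnpos : 0 < n := hk0.trans hkn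
  have hAn : ((A ^ n : SL2) : M2).mulVec p = p := by
    rw [hn, pow_orderOf_eq_one]; simp
  set d := Nat.gcd k n with hd
  have hfd : ((A ^ d : SL2) : M2).mulVec p = p := fix_gcd A k n p hfix hAn
  have hdpos : 0 < d := Nat.gcd_pos_of_pos_left _ hk0
  have hddvd : d ∣ n := Nat.gcd_dvd_right k n
  have hdlt : d < n := lt_of_le_of_lt (Nat.gcd_le_left n hk0) hkn
  set m := n / d with hm
  have hdm : d * m = n := Nat.mul_div_cancel' hddvd
  have hm1 : 1 < m := by
    rcases Nat.lt_or_ge 1 m with h | h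
    · exact h
    · interval_cases m <;> omega
  set l := m.minFac with hl
  have hlp : l.Prime := Nat.minFac_prime (by omega)
  have hlm : l ∣ m := Nat.minFac_dvd m
  have hmn : m ∣ n := ⟨d, by rw [← hdm, mul_comm]⟩
  have hln : l ∣ n := hlm.trans hmn
  have hnl : n / l = d * (m / l) := by
    rw [← hdm, Nat.mul_div_assoc d hlm]
  have hfixnl : ((A ^ (n / l) : SL2) : M2).mulVec p = p := by
    rw [hnl]; exact fix_pow_mul A hfd _
  have hnlpos : 0 < n / l := Nat.div_pos (Nat.le_of_dvd hnpos hln) hlp.pos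
  have hnllt : n / l < n := Nat.div_lt_self hnpos hlp.one_lt
  have hBne : A ^ (n / l) ≠ 1 := by
    intro h
    have := orderOf_dvd_of_pow_eq_one h
    rw [← hn] at this
    exact absurd (Nat.le_of_dvd hnlpos this) (by omega)
  have hBl : (A ^ (n / l)) ^ l = 1 := by
    rw [← pow_mul, Nat.div_mul_cancel hln, hn, pow_orderOf_eq_one]
  have hlq : l = q := unip (A ^ (n / l)) hBne hp hfixnl hlp hBl
  rw [hlq] at hln hfixnl
  exact ⟨hln, hfixnl⟩

theorem prime_count (A : SL2) :
    q * (q - 1) ≤ {p : Fin 2 → ZMod q | Function.Injective fun i : Fin (orderOf A) =>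
      ((A ^ (i : ℕ) : SL2) : M2).mulVec p}.ncard := by
  have hq2 : 2 ≤ q := (Fact.out : q.Prime).two_le
  set F := {p : Fin 2 → ZMod q | Function.Injective fun i : Fin (orderOf A) =>
      ((A ^ (i : ℕ) : SL2) : M2).mulVec p} with hF
  have hcard : Nat.card (Fin 2 → ZMod q) = q * q := by
    simp [Nat.card_eq_fintype_card, Fintype.card_fun, ZMod.card, sq]
  have hnpos : 0 < orderOf A := orderOf_pos A
  by_cases h1 : orderOf A = 1
  · have hFuniv : F = Set.univ := by
      apply Set.eq_univ_of_forall
      intro p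
      haveI : Subsingleton (Fin (orderOf A)) := by rw [h1]; infer_instance
      exact Function.injective_of_subsingleton _
    rw [hFuniv, Set.ncard_univ, hcard]
    exact Nat.mul_le_mul_left q (Nat.sub_le q 1)
  · have hNFle : Fᶜ.ncard ≤ q := by
      by_cases hX : ∀ p ∈ Fᶜ, p = (0 : Fin 2 → ZMod q)
      · have : Fᶜ ⊆ {(0 : Fin 2 → ZMod q)} := fun p hp => hX p hp
        calc Fᶜ.ncard ≤ ({(0 : Fin 2 → ZMod q)} : Set _).ncard :=
              Set.ncard_le_ncard this (Set.finite_singleton _)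
          _ = 1 := Set.ncard_singleton _
          _ ≤ q := by omega
      · push_neg at hX
        obtain ⟨p₀, hp₀mem, hp₀ne⟩ := hX
        have hp₀ : ∃ k, 0 < k ∧ k < orderOf A ∧ ((A ^ k : SL2) : M2).mulVec p₀ = p₀ :=
          (not_injective_iff A p₀).mp hp₀mem
        obtain ⟨k₀, hk₀0, hk₀n, hfix₀⟩ := hp₀
        obtain ⟨hqn, -⟩ := reduce A hp₀ne hk₀0 hk₀n hfix₀
        have hnqpos : 0 < orderOf A / q := Nat.div_pos (Nat.le_of_dvd hnpos hqn) (by omega)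
        have hnqlt : orderOf A / q < orderOf A := Nat.div_lt_self hnpos (by omega)
        have hB₀ne : A ^ (orderOf A / q) ≠ 1 := by
          intro h
          have := orderOf_dvd_of_pow_eq_one h
          exact absurd (Nat.le_of_dvd hnqpos this) (by omega)
        have hsub : Fᶜ ⊆ {p : Fin 2 → ZMod q |
            ((A ^ (orderOf A / q) : SL2) : M2).mulVec p = p} := by
          intro p hp
          by_cases hp0 : p = 0
          · subst hp0; simp [Set.mem_setOf_eq, Matrix.mulVec_zero]
          · obtain ⟨k, hk0, hkn, hfix⟩ := (not_injective_iff A p).mp hp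
            exact (reduce A hp0 hk0 hkn hfix).2
        calc Fᶜ.ncard ≤ _ := Set.ncard_le_ncard hsub (Set.toFinite _)
          _ ≤ q := fixline (A ^ (orderOf A / q)) hB₀ne
    have hsum : F.ncard + Fᶜ.ncard = q * q := by
      rw [Set.ncard_add_ncard_compl, hcard]
    have hFval : F.ncard = q * q - Fᶜ.ncard := by omega
    rw [hFval, ← Nat.pred_eq_sub_one, Nat.mul_pred]
    exact Nat.sub_le_sub_left hNFle _

end FPC2

namespace CRT

variable {u : ℕ} {q : Fin u → ℕ} {N : ℕ}

lemma crt_zero (hprime : ∀ j, (q j).Prime) (hdist : Function.Injective q)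
    (hN : N = ∏ j, q j) (hdvd : ∀ j, q j ∣ N) (x : ZMod N)
    (h : ∀ j, ZMod.castHom (hdvd j) (ZMod (q j)) x = 0) : x = 0 := by
  haveI : NeZero N := ⟨by rw [hN]; exact (Finset.prod_pos fun j _ => (hprime j).pos).ne'⟩
  have hxval : ((x.val : ℕ) : ZMod N) = x := ZMod.natCast_zmod_val x
  have hx : ∀ j, q j ∣ x.val := by
    intro j
    haveI : NeZero (q j) := ⟨(hprime j).pos.ne'⟩
    have := h j
    rw [← hxval, map_natCast] at this
    exact (ZMod.natCast_eq_zero_iff _ _).mp this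
  have hNx : N ∣ x.val := by
    have himg : ∏ p ∈ Finset.univ.image q, p ∣ x.val := by
      refine Finset.prod_primes_dvd _ (fun p hp => ?_) (fun p hp => ?_)
      · obtain ⟨j, -, rfl⟩ := Finset.mem_image.mp hp
        exact (hprime j).prime
      · obtain ⟨j, -, rfl⟩ := Finset.mem_image.mp hp
        exact hx j
    rwa [Finset.prod_image (fun i _ j _ hij => hdist hij), ← hN] at himg
  have hv : x.val = 0 := Nat.eq_zero_of_dvd_of_lt hNx (ZMod.val_lt x)
  rw [← hxval, hv, Nat.cast_zero]

end CRT

namespace CRT2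

open Matrix

variable {u : ℕ} {q : Fin u → ℕ} {N : ℕ}

lemma sl_eq_one (hprime : ∀ j, (q j).Prime) (hdist : Function.Injective q)
    (hN : N = ∏ j, q j) (hdvd : ∀ j, q j ∣ N)
    (H : SpecialLinearGroup (Fin 2) (ZMod N))
    (h : ∀ j, SpecialLinearGroup.map (ZMod.castHom (hdvd j) (ZMod (q j))) H = 1) : H = 1 := by
  apply Subtype.ext
  have hone : ((1 : SpecialLinearGroup (Fin 2) (ZMod N)) : Matrix (Fin 2) (Fin 2) (ZMod N)) = 1 :=
    rfl
  rw [hone]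
  ext a b
  have key : ∀ j, ZMod.castHom (hdvd j) (ZMod (q j))
      ((H : Matrix (Fin 2) (Fin 2) (ZMod N)) a b - (1 : Matrix (Fin 2) (Fin 2) (ZMod N)) a b)
      = 0 := by
    intro j
    have := congrArg (fun X => ((X : SpecialLinearGroup (Fin 2) (ZMod (q j))) :
      Matrix (Fin 2) (Fin 2) (ZMod (q j))) a b) (h j)
    simp only [SpecialLinearGroup.map_apply_coe, RingHom.mapMatrix_apply,
      Matrix.map_apply] at this
    rw [map_sub]
    rw [this]
    simp [Matrix.one_apply]
  have := CRT.crt_zero hprime hdist hN hdvd _ key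
  rwa [sub_eq_zero] at this

lemma pow_eq_one_iff (hprime : ∀ j, (q j).Prime) (hdist : Function.Injective q)
    (hN : N = ∏ j, q j) (hdvd : ∀ j, q j ∣ N)
    (G : SpecialLinearGroup (Fin 2) (ZMod N)) (k : ℕ) :
    G ^ k = 1 ↔
      ∀ j, (SpecialLinearGroup.map (ZMod.castHom (hdvd j) (ZMod (q j))) G) ^ k = 1 := by
  constructor
  · intro h j
    rw [← map_pow, h, _root_.map_one]
  · intro h
    apply sl_eq_one hprime hdist hN hdvd
    intro j
    rw [map_pow]
    exact h j

lemma order_eq_lcm (hprime : ∀ j, (q j).Prime) (hdist : Function.Injective q)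
    (hN : N = ∏ j, q j) (hdvd : ∀ j, q j ∣ N)
    (G : SpecialLinearGroup (Fin 2) (ZMod N)) :
    orderOf G = Finset.univ.lcm (fun j =>
      orderOf (SpecialLinearGroup.map (ZMod.castHom (hdvd j) (ZMod (q j))) G)) := by
  haveI : NeZero N := ⟨by rw [hN]; exact (Finset.prod_pos fun j _ => (hprime j).pos).ne'⟩
  apply Nat.dvd_antisymm
  · rw [orderOf_dvd_iff_pow_eq_one, pow_eq_one_iff hprime hdist hN hdvd]
    intro j
    rw [← orderOf_dvd_iff_pow_eq_one]
    exact Finset.dvd_lcm (Finset.mem_univ j)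
  · apply Finset.lcm_dvd
    intro j _
    rw [orderOf_dvd_iff_pow_eq_one, ← map_pow, pow_orderOf_eq_one, _root_.map_one]

end CRT2

namespace CRT3

open Matrix

variable {u : ℕ} {q : Fin u → ℕ} {N : ℕ}

lemma transfer (hprime : ∀ j, (q j).Prime) (hdist : Function.Injective q)
    (hN : N = ∏ j, q j) (hdvd : ∀ j, q j ∣ N)
    (G : SpecialLinearGroup (Fin 2) (ZMod N)) (p : Fin 2 → ZMod N)
    (hp : ∀ j, Function.Injective fun i :
          Fin (orderOf (SpecialLinearGroup.map (ZMod.castHom (hdvd j) (ZMod (q j))) G)) =>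
        ((SpecialLinearGroup.map (ZMod.castHom (hdvd j) (ZMod (q j))) G ^ (i : ℕ) :
          SpecialLinearGroup (Fin 2) (ZMod (q j))) : Matrix (Fin 2) (Fin 2) (ZMod (q j))).mulVec
          (fun l => ZMod.castHom (hdvd j) (ZMod (q j)) (p l))) :
    Function.Injective fun i : Fin (orderOf G) =>
      ((G ^ (i : ℕ) : SpecialLinearGroup (Fin 2) (ZMod N)) :
        Matrix (Fin 2) (Fin 2) (ZMod N)).mulVec p := by
  haveI : NeZero N := ⟨by rw [hN]; exact (Finset.prod_pos fun j _ => (hprime j).pos).ne'⟩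
  suffices key : ∀ i j : Fin (orderOf G), (i : ℕ) ≤ (j : ℕ) →
      ((G ^ (i : ℕ) : SpecialLinearGroup (Fin 2) (ZMod N)) :
        Matrix (Fin 2) (Fin 2) (ZMod N)).mulVec p =
      ((G ^ (j : ℕ) : SpecialLinearGroup (Fin 2) (ZMod N)) :
        Matrix (Fin 2) (Fin 2) (ZMod N)).mulVec p → i = j by
    intro i j h
    rcases le_total (i : ℕ) (j : ℕ) with hle | hle
    · exact key i j hle h
    · exact (key j i hle h.symm).symm
  intro i j hle heq
  have hdall : ∀ j' : Fin u,
      orderOf (SpecialLinearGroup.map (ZMod.castHom (hdvd j') (ZMod (q j'))) G) ∣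
        (j : ℕ) - (i : ℕ) := by
    intro j'
    haveI : Fact (q j').Prime := ⟨hprime j'⟩
    set f := ZMod.castHom (hdvd j') (ZMod (q j')) with hf
    set A := SpecialLinearGroup.map f G with hA
    have hm : 0 < orderOf A := orderOf_pos A
    have hcomm : ∀ k : ℕ,
        ((A ^ k : SpecialLinearGroup (Fin 2) (ZMod (q j'))) :
          Matrix (Fin 2) (Fin 2) (ZMod (q j'))).mulVec (fun l => f (p l)) =
        fun l => f ((((G ^ k : SpecialLinearGroup (Fin 2) (ZMod N)) :
          Matrix (Fin 2) (Fin 2) (ZMod N)).mulVec p) l) := by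
      intro k
      funext l
      rw [hA, ← map_pow, SpecialLinearGroup.map_apply_coe, RingHom.mapMatrix_apply]
      exact (RingHom.map_mulVec f _ p l).symm
    have heqj : (fun ii : Fin (orderOf A) =>
          ((A ^ (ii : ℕ) : SpecialLinearGroup (Fin 2) (ZMod (q j'))) :
            Matrix (Fin 2) (Fin 2) (ZMod (q j'))).mulVec (fun l => f (p l)))
          ⟨(i : ℕ) % orderOf A, Nat.mod_lt _ hm⟩ =
        (fun ii : Fin (orderOf A) =>
          ((A ^ (ii : ℕ) : SpecialLinearGroup (Fin 2) (ZMod (q j'))) :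
            Matrix (Fin 2) (Fin 2) (ZMod (q j'))).mulVec (fun l => f (p l)))
          ⟨(j : ℕ) % orderOf A, Nat.mod_lt _ hm⟩ := by
      simp only
      rw [pow_mod_orderOf, pow_mod_orderOf, hcomm, hcomm, heq]
    have := hp j' heqj
    have hmod : (i : ℕ) % orderOf A = (j : ℕ) % orderOf A := by
      simpa using congrArg Fin.val this
    exact (Nat.modEq_iff_dvd' hle).mp hmod
  have hkey : ∀ x : ℕ, (∀ j' : Fin u,
      orderOf (SpecialLinearGroup.map (ZMod.castHom (hdvd j') (ZMod (q j'))) G) ∣ x) →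
      orderOf G ∣ x := by
    intro x hx
    rw [CRT2.order_eq_lcm hprime hdist hN hdvd]
    exact Finset.lcm_dvd fun j' _ => hx j'
  have hlcm : orderOf G ∣ (j : ℕ) - (i : ℕ) := hkey _ hdall
  have : (j : ℕ) - (i : ℕ) = 0 := Nat.eq_zero_of_dvd_of_lt hlcm (by omega)
  exact Fin.ext (by omega)

end CRT3

/-- let `N = q₁⋯q_u` with the `q_j` distinct odd primes, and let
`G ∈ SL(2, ℤ/Nℤ)` correspond under CRT to `(G₁, …, G_u)` with `G_j` of order `n_j`.
Then the order of `G` is `lcm(n₁, …, n_u)`; if each component `p_j` of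
`p ∈ (ℤ/Nℤ)²` is `G_j`-full then `p` is `G`-full; and consequently the number of
`G`-full points is at least `N(q₁−1)⋯(q_u−1)`. -/
theorem full_points_count_composite (u : ℕ) (q : Fin u → ℕ)
    (hprime : ∀ j, (q j).Prime) (hodd : ∀ j, Odd (q j))
    (hdist : Function.Injective q)
    (N : ℕ) (hN : N = ∏ j, q j) (hdvd : ∀ j, q j ∣ N)
    (G : Matrix.SpecialLinearGroup (Fin 2) (ZMod N)) :
    orderOf G =
      Finset.univ.lcm (fun j =>
        orderOf (Matrix.SpecialLinearGroup.map (ZMod.castHom (hdvd j) (ZMod (q j))) G)) ∧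
    (∀ p : Fin 2 → ZMod N,
      (∀ j, Function.Injective fun i :
            Fin (orderOf (Matrix.SpecialLinearGroup.map (ZMod.castHom (hdvd j) (ZMod (q j))) G)) =>
          ((Matrix.SpecialLinearGroup.map (ZMod.castHom (hdvd j) (ZMod (q j))) G ^ (i : ℕ) :
            Matrix.SpecialLinearGroup (Fin 2) (ZMod (q j))) : Matrix (Fin 2) (Fin 2) (ZMod (q j))).mulVec
            (fun l => ZMod.castHom (hdvd j) (ZMod (q j)) (p l))) →
      Function.Injective fun i : Fin (orderOf G) =>
        ((G ^ (i : ℕ) : Matrix.SpecialLinearGroup (Fin 2) (ZMod N)) :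
          Matrix (Fin 2) (Fin 2) (ZMod N)).mulVec p) ∧
    N * ∏ j, (q j - 1) ≤
      {p : Fin 2 → ZMod N |
        Function.Injective fun i : Fin (orderOf G) =>
          ((G ^ (i : ℕ) : Matrix.SpecialLinearGroup (Fin 2) (ZMod N)) :
            Matrix (Fin 2) (Fin 2) (ZMod N)).mulVec p}.ncard := by
  haveI : NeZero N := ⟨by rw [hN]; exact (Finset.prod_pos fun j _ => (hprime j).pos).ne'⟩
  refine ⟨CRT2.order_eq_lcm hprime hdist hN hdvd G, fun p hp =>
    CRT3.transfer hprime hdist hN hdvd G p hp, ?_⟩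
  -- counting
  classical
  set Φ : (Fin 2 → ZMod N) → ∀ j, (Fin 2 → ZMod (q j)) :=
    fun p j l => ZMod.castHom (hdvd j) (ZMod (q j)) (p l) with hΦ
  have hΦinj : Function.Injective Φ := by
    intro p p' h
    funext l
    have : ∀ j, ZMod.castHom (hdvd j) (ZMod (q j)) (p l - p' l) = 0 := by
      intro j
      rw [map_sub]
      have := congrFun (congrFun h j) l
      simp only [hΦ] at this
      rw [this, sub_self]
    have := CRT.crt_zero hprime hdist hN hdvd _ this
    rwa [sub_eq_zero] at this
  haveI : ∀ j, NeZero (q j) := fun j => ⟨(hprime j).pos.ne'⟩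
  have hΦbij : Function.Bijective Φ := by
    rw [Fintype.bijective_iff_injective_and_card]
    refine ⟨hΦinj, ?_⟩
    simp only [Fintype.card_fun, Fintype.card_pi, ZMod.card, Fintype.card_fin]
    rw [hN, ← Finset.prod_pow]
  set e := Equiv.ofBijective Φ hΦbij with he
  set S : ∀ j, Set (Fin 2 → ZMod (q j)) := fun j =>
    {v : Fin 2 → ZMod (q j) | Function.Injective fun i :
        Fin (orderOf (Matrix.SpecialLinearGroup.map (ZMod.castHom (hdvd j) (ZMod (q j))) G)) =>
      ((Matrix.SpecialLinearGroup.map (ZMod.castHom (hdvd j) (ZMod (q j))) G ^ (i : ℕ) :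
        Matrix.SpecialLinearGroup (Fin 2) (ZMod (q j))) :
        Matrix (Fin 2) (Fin 2) (ZMod (q j))).mulVec v} with hS
  have hsub : e ⁻¹' (Set.univ.pi S) ⊆
      {p : Fin 2 → ZMod N |
        Function.Injective fun i : Fin (orderOf G) =>
          ((G ^ (i : ℕ) : Matrix.SpecialLinearGroup (Fin 2) (ZMod N)) :
            Matrix (Fin 2) (Fin 2) (ZMod N)).mulVec p} := by
    intro p hpmem
    have hcomp : ∀ j, Φ p j ∈ S j := fun j => hpmem j (Set.mem_univ j)
    exact CRT3.transfer hprime hdist hN hdvd G p hcomp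
  have hpre : (e ⁻¹' (Set.univ.pi S)).ncard = (Set.univ.pi S).ncard := by
    have hpre' : ⇑e ⁻¹' Set.univ.pi S = ⇑e.symm '' Set.univ.pi S := by
      rw [Equiv.image_eq_preimage_symm, Equiv.symm_symm]
    rw [hpre']
    exact Set.ncard_image_of_injective _ e.symm.injective
  have hpi : (Set.univ.pi S).ncard = ∏ j, (S j).ncard := by
    rw [← Nat.card_coe_set_eq, Nat.card_congr (Equiv.Set.univPi S), Nat.card_pi]
    exact Finset.prod_congr rfl fun j _ => Nat.card_coe_set_eq (S j)
  have hlow : ∀ j, q j * (q j - 1) ≤ (S j).ncard := by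
    intro j
    haveI : Fact (q j).Prime := ⟨hprime j⟩
    exact FPC2.prime_count (Matrix.SpecialLinearGroup.map
      (ZMod.castHom (hdvd j) (ZMod (q j))) G)
  calc N * ∏ j, (q j - 1) = ∏ j, (q j * (q j - 1)) := by
        rw [Finset.prod_mul_distrib, ← hN]
    _ ≤ ∏ j, (S j).ncard := Finset.prod_le_prod' fun j _ => hlow j
    _ = (Set.univ.pi S).ncard := hpi.symm
    _ = (e ⁻¹' (Set.univ.pi S)).ncard := hpre.symm
    _ ≤ _ := Set.ncard_le_ncard hsub (Set.toFinite _)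
end

section
/- In the dimension-6 setting: with R = (D₀₃+D₃₀+D₃₃)/√3, S = (D₀₃+ω²D₃₀+ω⁴D₃₃)/√3, T = (D₀₃+ω⁴D₃₀+ω²D₃₃)/√3 (ω = e^{2πi/6}, D the N=6 displacement operators), one has S = T†, S² = T² = 0, R² = I, ST = I + R, and TS = I − R; hence (I+R)/2 and (I−R)/2 are complementary orthogonal projections of rank 3 each. -/
set_option maxHeartbeats 1000000

open Matrix

/-- `ω = e^{2πi/N}`. -/
noncomputable def omegaN (N : ℕ) : ℂ := Complex.exp (2 * Real.pi * Complex.I / N)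

/-- `τ = -e^{πi/N}`. -/
noncomputable def tauN (N : ℕ) : ℂ := -Complex.exp (Real.pi * Complex.I / N)

/-- The power `X^a` of the cyclic shift operator `X|u⟩ = |u+1⟩` on `ℂ^N`. -/
def Xpow (N : ℕ) (a : ℤ) : Matrix (ZMod N) (ZMod N) ℂ :=
  Matrix.of fun i j => if i = j + (a : ZMod N) then 1 else 0

/-- The power `Z^b` of the clock operator `Z|u⟩ = ω^u|u⟩` on `ℂ^N`. -/
noncomputable def Zpow (N : ℕ) (b : ℤ) : Matrix (ZMod N) (ZMod N) ℂ :=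
  Matrix.diagonal fun u => omegaN N ^ (b * (u.val : ℤ))

/-- The displacement operator `D_p = τ^{p₁p₂} X^{p₁} Z^{p₂}` for `p ∈ ℤ²`. -/
noncomputable def Dop (N : ℕ) [NeZero N] (p : ℤ × ℤ) : Matrix (ZMod N) (ZMod N) ℂ :=
  tauN N ^ (p.1 * p.2) • (Xpow N p.1 * Zpow N p.2)

/-! ### Auxiliary definitions and lemmas -/

noncomputable def dvec : ZMod 6 → ℂ := fun u => (-1)^u.val

noncomputable def Dmat : Matrix (ZMod 6) (ZMod 6) ℂ := Matrix.diagonal dvec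
noncomputable def Qmat : Matrix (ZMod 6) (ZMod 6) ℂ := Xpow 6 3
noncomputable def Kmat : Matrix (ZMod 6) (ZMod 6) ℂ := Qmat * Dmat

lemma aux_omega6_cube : omegaN 6 ^ (3:ℕ) = -1 := by
  rw [omegaN, ← Complex.exp_nat_mul]
  have h : (3:ℕ) * (2 * (Real.pi:ℂ) * Complex.I / ((6:ℕ):ℂ)) = Real.pi * Complex.I := by
    push_cast; ring
  rw [h, Complex.exp_pi_mul_I]

lemma aux_tau6_nine : tauN 6 ^ (9:ℕ) = Complex.I := by
  rw [tauN]
  rw [show (-Complex.exp (Real.pi * Complex.I / ((6:ℕ):ℂ))) ^ (9:ℕ)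
      = -(Complex.exp (Real.pi * Complex.I / ((6:ℕ):ℂ)) ^ (9:ℕ)) by ring]
  rw [← Complex.exp_nat_mul]
  have h : (9:ℕ) * ((Real.pi:ℂ) * Complex.I / ((6:ℕ):ℂ)) = ((3*Real.pi/2 : ℝ):ℂ) * Complex.I := by
    push_cast; ring
  rw [h, Complex.exp_mul_I, ← Complex.ofReal_cos, ← Complex.ofReal_sin]
  have hc : Real.cos (3*Real.pi/2) = 0 := by
    rw [show (3*Real.pi/2 : ℝ) = Real.pi + Real.pi/2 by ring, Real.cos_add]; simp
  have hs : Real.sin (3*Real.pi/2) = -1 := by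
    rw [show (3*Real.pi/2 : ℝ) = Real.pi + Real.pi/2 by ring, Real.sin_add]; simp
  rw [hc, hs]; push_cast; ring

lemma aux_Zpow3_eq : Zpow 6 3 = Matrix.diagonal dvec := by
  rw [Zpow]
  have hfun : (fun u : ZMod 6 => omegaN 6 ^ ((3:ℤ) * (u.val:ℤ))) = dvec := by
    funext u
    rw [show (3:ℤ) * (u.val:ℤ) = ((3*u.val : ℕ):ℤ) by push_cast; ring,
       zpow_natCast, pow_mul, aux_omega6_cube]
    rfl
  rw [hfun]

lemma aux_D03_eq : Dop 6 (0, 3) = Dmat := by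
  rw [Dop, Dmat]
  have hX : Xpow 6 0 = 1 := by ext i j; simp [Xpow, Matrix.one_apply]
  simp only [show ((0:ℤ),(3:ℤ)).1 * ((0:ℤ),(3:ℤ)).2 = 0 from rfl, zpow_zero, one_smul]
  rw [hX, one_mul, aux_Zpow3_eq]

lemma aux_D30_eq : Dop 6 (3, 0) = Qmat := by
  rw [Dop, Qmat]
  have hZ : Zpow 6 0 = 1 := by
    rw [Zpow]; simp [Matrix.diagonal_one]
  simp only [show ((3:ℤ),(0:ℤ)).1 * ((3:ℤ),(0:ℤ)).2 = 0 from rfl, zpow_zero, one_smul]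
  rw [hZ, mul_one]

lemma aux_D33_eq : Dop 6 (3, 3) = Complex.I • Kmat := by
  rw [Dop, Kmat, Qmat, Dmat]
  simp only [show ((3:ℤ),(3:ℤ)).1 * ((3:ℤ),(3:ℤ)).2 = ((9:ℕ):ℤ) from rfl, zpow_natCast,
    aux_tau6_nine]
  rw [aux_Zpow3_eq]

lemma aux_Xpow_mul (a b : ℤ) : Xpow 6 a * Xpow 6 b = Xpow 6 (a+b) := by
  ext i j
  rw [Matrix.mul_apply, Finset.sum_eq_single (j + (b : ZMod 6))]
  · have h : (j + (b:ZMod 6)) + (a : ZMod 6) = j + ((a+b : ℤ) : ZMod 6) := by push_cast; ring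
    simp [Xpow, h]
  · intro k _ hk
    simp [Xpow, hk, Ne.symm hk]
  · simp

lemma aux_pQQ : Qmat * Qmat = 1 := by
  rw [Qmat, aux_Xpow_mul]
  ext i j; simp [Xpow, Matrix.one_apply, show ((6:ZMod 6)) = 0 by decide]

lemma aux_pDD : Dmat * Dmat = 1 := by
  rw [Dmat, Matrix.diagonal_mul_diagonal]
  have h : (fun u : ZMod 6 => dvec u * dvec u) = fun _ => 1 := by
    funext u; rw [dvec, ← mul_pow]; norm_num
  rw [h, Matrix.diagonal_one]

lemma aux_dvec_add_three (j : ZMod 6) : dvec (j + 3) = -dvec j := by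
  have hv : (j + 3).val = (j.val + 3) % 6 := by
    rw [ZMod.val_add]; rfl
  rw [dvec, dvec, hv]
  have h2 : ((-1:ℂ))^((j.val + 3) % 6) = (-1)^(((j.val+3) % 6) % 2) := by
    rw [← neg_one_pow_eq_pow_mod_two]
  have h3 : ((-1:ℂ))^(j.val) = (-1)^((j.val) % 2) := by
    rw [← neg_one_pow_eq_pow_mod_two]
  rw [h2, h3]
  have h4 : ((j.val+3) % 6) % 2 = (j.val % 2 + 1) % 2 := by omega
  rw [h4]
  rcases Nat.mod_two_eq_zero_or_one j.val with h | h <;> rw [h] <;> norm_num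

lemma aux_pDQ : Dmat * Qmat = -Kmat := by
  rw [Dmat, Qmat, Kmat, Qmat, Dmat]
  ext i j
  rw [Matrix.diagonal_mul, Matrix.neg_apply, Matrix.mul_diagonal]
  by_cases h : i = j + (3:ZMod 6)
  · rw [show Xpow 6 3 i j = 1 by simp [Xpow, h]]
    rw [h, aux_dvec_add_three]
    ring
  · rw [show Xpow 6 3 i j = 0 by simp [Xpow, h]]
    ring

lemma aux_pQD : Qmat * Dmat = Kmat := rfl

lemma aux_pKD : Kmat * Dmat = Qmat := by
  rw [Kmat, mul_assoc, aux_pDD, mul_one]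

lemma aux_pQK : Qmat * Kmat = Dmat := by
  rw [Kmat, ← mul_assoc, aux_pQQ, one_mul]

lemma aux_pDK : Dmat * Kmat = -Qmat := by
  rw [Kmat, ← mul_assoc, aux_pDQ, Kmat, neg_mul, mul_assoc, aux_pDD, mul_one]

lemma aux_pKQ : Kmat * Qmat = -Dmat := by
  rw [Kmat, mul_assoc, aux_pDQ, mul_neg, aux_pQK]

lemma aux_pKK : Kmat * Kmat = -1 := by
  nth_rewrite 1 [Kmat]
  rw [mul_assoc, aux_pDK, mul_neg, aux_pQQ]

lemma aux_Dherm : Dmatᴴ = Dmat := by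
  rw [Dmat, Matrix.diagonal_conjTranspose]
  have h : star dvec = dvec := by
    funext u
    simp [dvec, Pi.star_apply]
  rw [h]

lemma aux_Qherm : Qmatᴴ = Qmat := by
  rw [Qmat]
  ext i j
  simp only [Matrix.conjTranspose_apply, Xpow, Matrix.of_apply]
  have h : j = i + ((3:ℤ):ZMod 6) ↔ i = j + ((3:ℤ):ZMod 6) := by
    constructor <;> intro h <;> rw [h, add_assoc] <;>
      push_cast <;> simp [show (3:ZMod 6) + 3 = 0 by decide]
  rw [if_congr h rfl rfl]
  split <;> simp

lemma aux_Kherm : Kmatᴴ = -Kmat := by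
  rw [Kmat, Matrix.conjTranspose_mul, aux_Dherm, aux_Qherm, aux_pDQ, aux_pQD]

lemma aux_rank_smul (c : ℂ) (hc : c ≠ 0) (A : Matrix (ZMod 6) (ZMod 6) ℂ) :
    (c • A).rank = A.rank := by
  apply le_antisymm
  · have h : c • A = (c • (1 : Matrix (ZMod 6) (ZMod 6) ℂ)) * A := by
      rw [Matrix.smul_mul, one_mul]
    rw [h]; exact Matrix.rank_mul_le_right _ _
  · have h : A = (c⁻¹ • (1 : Matrix (ZMod 6) (ZMod 6) ℂ)) * (c • A) := by
      rw [Matrix.smul_mul, one_mul, smul_smul, inv_mul_cancel₀ hc, one_smul]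
    nth_rewrite 1 [h]
    exact Matrix.rank_mul_le_right _ _

lemma aux_rank_add_le (A B : Matrix (ZMod 6) (ZMod 6) ℂ) :
    (A + B).rank ≤ A.rank + B.rank := by
  rw [Matrix.rank, Matrix.rank, Matrix.rank]
  have hle : LinearMap.range (A + B).mulVecLin ≤
      LinearMap.range A.mulVecLin ⊔ LinearMap.range B.mulVecLin := by
    rintro x ⟨y, rfl⟩
    rw [Matrix.mulVecLin_add]
    exact Submodule.add_mem_sup ⟨y, rfl⟩ ⟨y, rfl⟩
  calc Module.finrank ℂ (LinearMap.range (A + B).mulVecLin)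
      ≤ Module.finrank ℂ ↥(LinearMap.range A.mulVecLin ⊔ LinearMap.range B.mulVecLin) :=
        Submodule.finrank_mono hle
    _ ≤ _ := by
        have h := Submodule.finrank_sup_add_finrank_inf_eq
          (LinearMap.range A.mulVecLin) (LinearMap.range B.mulVecLin)
        omega

lemma aux_rank_le_of_sq_zero (A : Matrix (ZMod 6) (ZMod 6) ℂ) (h : A * A = 0) :
    A.rank ≤ 3 := by
  have hrange : LinearMap.range A.mulVecLin ≤ LinearMap.ker A.mulVecLin := by
    rintro x ⟨y, rfl⟩
    have h1 := congrArg Matrix.mulVecLin h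
    rw [Matrix.mulVecLin_mul] at h1
    have h2 := congrFun (congrArg DFunLike.coe h1) y
    simpa using h2
  have h1 : A.rank ≤ Module.finrank ℂ (LinearMap.ker A.mulVecLin) :=
    Submodule.finrank_mono hrange
  have h2 := LinearMap.finrank_range_add_finrank_ker A.mulVecLin
  have h3 : Module.finrank ℂ (ZMod 6 → ℂ) = 6 := by
    rw [Module.finrank_fintype_fun_eq_card]; rfl
  rw [h3] at h2
  rw [Matrix.rank] at *
  omega

/-- in dimension `N = 6`, with `ω = e^{2πi/6}` and
`R = (D₀₃+D₃₀+D₃₃)/√3`, `S = (D₀₃+ω²D₃₀+ω⁴D₃₃)/√3`, `T = (D₀₃+ω⁴D₃₀+ω²D₃₃)/√3`,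
one has `S = T†`, `S² = T² = 0`, `R² = I`, `ST = I + R`, `TS = I − R`; hence
`(I+R)/2` and `(I−R)/2` are complementary orthogonal projections of rank 3 each. -/
theorem RST_relations (ω : ℂ) (hω : ω = Complex.exp (2 * Real.pi * Complex.I / 6))
    (R S T : Matrix (ZMod 6) (ZMod 6) ℂ)
    (hR : R = ((Real.sqrt 3 : ℂ))⁻¹ • (Dop 6 (0, 3) + Dop 6 (3, 0) + Dop 6 (3, 3)))
    (hS : S = ((Real.sqrt 3 : ℂ))⁻¹ • (Dop 6 (0, 3) + ω ^ 2 • Dop 6 (3, 0) + ω ^ 4 • Dop 6 (3, 3)))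
    (hT : T = ((Real.sqrt 3 : ℂ))⁻¹ • (Dop 6 (0, 3) + ω ^ 4 • Dop 6 (3, 0) + ω ^ 2 • Dop 6 (3, 3))) :
    S = Tᴴ ∧ S * S = 0 ∧ T * T = 0 ∧ R * R = 1 ∧
    S * T = 1 + R ∧ T * S = 1 - R ∧
    ((2 : ℂ)⁻¹ • (1 + R)) * ((2 : ℂ)⁻¹ • (1 + R)) = (2 : ℂ)⁻¹ • (1 + R) ∧
    ((2 : ℂ)⁻¹ • (1 + R))ᴴ = (2 : ℂ)⁻¹ • (1 + R) ∧
    ((2 : ℂ)⁻¹ • (1 - R)) * ((2 : ℂ)⁻¹ • (1 - R)) = (2 : ℂ)⁻¹ • (1 - R) ∧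
    ((2 : ℂ)⁻¹ • (1 - R))ᴴ = (2 : ℂ)⁻¹ • (1 - R) ∧
    ((2 : ℂ)⁻¹ • (1 + R)) * ((2 : ℂ)⁻¹ • (1 - R)) = 0 ∧
    (2 : ℂ)⁻¹ • (1 + R) + (2 : ℂ)⁻¹ • (1 - R) = 1 ∧
    ((2 : ℂ)⁻¹ • (1 + R)).rank = 3 ∧ ((2 : ℂ)⁻¹ • (1 - R)).rank = 3 := by
  have hsne : ((Real.sqrt 3 : ℝ):ℂ) ≠ 0 := by
    have h : Real.sqrt 3 ≠ 0 := by positivity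
    exact_mod_cast Complex.ofReal_ne_zero.mpr h
  have hval : ω = 1/2 + ((Real.sqrt 3 : ℝ):ℂ)/2 * Complex.I := by
    rw [hω]
    have h : (2 * (Real.pi:ℂ) * Complex.I / 6) = ((Real.pi/3 : ℝ) :ℂ) * Complex.I := by
      push_cast; ring
    rw [h, Complex.exp_mul_I, ← Complex.ofReal_cos, ← Complex.ofReal_sin]
    rw [Real.cos_pi_div_three, Real.sin_pi_div_three]
    push_cast; ring
  have hs2 : ((Real.sqrt 3 : ℝ):ℂ)^2 = 3 := by
    rw [← Complex.ofReal_pow, Real.sq_sqrt (by norm_num : (3:ℝ) ≥ 0)]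
    norm_num
  have hs_eq : ((Real.sqrt 3 : ℝ):ℂ) = Complex.I * (1 - 2*ω) := by
    linear_combination 2*Complex.I*hval + ((Real.sqrt 3 : ℝ):ℂ)*Complex.I_sq
  have hw2 : ω^2 = ω - 1 := by
    rw [hval]
    linear_combination (Complex.I^2/4) * hs2 + (3/4) * Complex.I_sq
  have hw3 : ω^3 = -1 := by rw [pow_succ, hw2]; linear_combination hw2
  have hw4 : ω^4 = -ω := by rw [pow_succ, hw3]; ring
  have hw5 : ω^5 = 1 - ω := by rw [pow_succ, hw4]; linear_combination -hw2
  have hw6 : ω^6 = 1 := by rw [pow_succ, hw5]; linear_combination -hw2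
  have hw7 : ω^7 = ω := by rw [pow_succ, hw6, one_mul]
  have hw8 : ω^8 = ω - 1 := by rw [pow_succ, hw7]; linear_combination hw2
  have hw9 : ω^9 = -1 := by rw [pow_succ, hw8]; linear_combination hw2
  have hw10 : ω^10 = -ω := by rw [pow_succ, hw9]; ring
  have hw11 : ω^11 = 1 - ω := by rw [pow_succ, hw10]; linear_combination -hw2
  have hw12 : ω^12 = 1 := by rw [pow_succ, hw11]; linear_combination -hw2
  have hI2 : Complex.I^2 = -1 := Complex.I_sq
  have hI3 : Complex.I^3 = -Complex.I := by rw [pow_succ, hI2]; ring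
  have hI4 : Complex.I^4 = 1 := by rw [pow_succ, hI3]; simp [Complex.I_mul_I]
  have hI5 : Complex.I^5 = Complex.I := by rw [pow_succ, hI4, one_mul]
  have hI6 : Complex.I^6 = -1 := by rw [pow_succ, hI5]; simp [Complex.I_mul_I]
  have hstarω : star ω = 1 - ω := by
    rw [hval]
    simp only [Complex.star_def, map_add, map_div₀, _root_.map_mul, _root_.map_one,
      map_ofNat, Complex.conj_ofReal, Complex.conj_I]
    ring
  have hRw : R = ((Real.sqrt 3 : ℂ))⁻¹ • (Dmat + Qmat + Complex.I • Kmat) := by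
    rw [hR, aux_D03_eq, aux_D30_eq, aux_D33_eq]
  have hSw : S = ((Real.sqrt 3 : ℂ))⁻¹ • (Dmat + ω^2 • Qmat + ω^4 • (Complex.I • Kmat)) := by
    rw [hS, aux_D03_eq, aux_D30_eq, aux_D33_eq]
  have hTw : T = ((Real.sqrt 3 : ℂ))⁻¹ • (Dmat + ω^4 • Qmat + ω^2 • (Complex.I • Kmat)) := by
    rw [hT, aux_D03_eq, aux_D30_eq, aux_D33_eq]
  have hSS : S * S = 0 := by
    rw [hSw]
    simp only [Matrix.smul_mul, Matrix.mul_smul, Matrix.add_mul, Matrix.mul_add,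
      smul_add, smul_smul, aux_pDD, aux_pQQ, aux_pDQ, aux_pQD, aux_pKD, aux_pQK,
      aux_pDK, aux_pKQ, aux_pKK, smul_neg, Matrix.mul_neg, Matrix.neg_mul]
    match_scalars
    all_goals try field_simp
    all_goals try rw [hs_eq]
    all_goals try ring_nf
    all_goals try simp only [hw2, hw3, hw4, hw5, hw6, hw7, hw8, hw9, hw10, hw11, hw12,
      hI2, hI3, hI4, hI5, hI6]
    all_goals try ring_nf
    all_goals try norm_num
  have hTT : T * T = 0 := by
    rw [hTw]
    simp only [Matrix.smul_mul, Matrix.mul_smul, Matrix.add_mul, Matrix.mul_add,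
      smul_add, smul_smul, aux_pDD, aux_pQQ, aux_pDQ, aux_pQD, aux_pKD, aux_pQK,
      aux_pDK, aux_pKQ, aux_pKK, smul_neg, Matrix.mul_neg, Matrix.neg_mul]
    match_scalars
    all_goals try field_simp
    all_goals try rw [hs_eq]
    all_goals try ring_nf
    all_goals try simp only [hw2, hw3, hw4, hw5, hw6, hw7, hw8, hw9, hw10, hw11, hw12,
      hI2, hI3, hI4, hI5, hI6]
    all_goals try ring_nf
    all_goals try norm_num
  have hRR : R * R = 1 := by
    rw [hRw]
    simp only [Matrix.smul_mul, Matrix.mul_smul, Matrix.add_mul, Matrix.mul_add,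
      smul_add, smul_smul, aux_pDD, aux_pQQ, aux_pDQ, aux_pQD, aux_pKD, aux_pQK,
      aux_pDK, aux_pKQ, aux_pKK, smul_neg, Matrix.mul_neg, Matrix.neg_mul]
    match_scalars
    all_goals try field_simp
    all_goals try rw [hs_eq]
    all_goals try ring_nf
    all_goals try simp only [hw2, hw3, hw4, hw5, hw6, hw7, hw8, hw9, hw10, hw11, hw12,
      hI2, hI3, hI4, hI5, hI6]
    all_goals try ring_nf
    all_goals try norm_num
  have hST : S * T = 1 + R := by
    rw [hSw, hTw, hRw]
    simp only [Matrix.smul_mul, Matrix.mul_smul, Matrix.add_mul, Matrix.mul_add,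
      smul_add, smul_smul, aux_pDD, aux_pQQ, aux_pDQ, aux_pQD, aux_pKD, aux_pQK,
      aux_pDK, aux_pKQ, aux_pKK, smul_neg, Matrix.mul_neg, Matrix.neg_mul]
    match_scalars
    all_goals try field_simp
    all_goals try rw [hs_eq]
    all_goals try ring_nf
    all_goals try simp only [hw2, hw3, hw4, hw5, hw6, hw7, hw8, hw9, hw10, hw11, hw12,
      hI2, hI3, hI4, hI5, hI6]
    all_goals try ring_nf
    all_goals try norm_num
  have hTS : T * S = 1 - R := by
    rw [hSw, hTw, hRw]
    simp only [Matrix.smul_mul, Matrix.mul_smul, Matrix.add_mul, Matrix.mul_add,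
      smul_add, smul_smul, aux_pDD, aux_pQQ, aux_pDQ, aux_pQD, aux_pKD, aux_pQK,
      aux_pDK, aux_pKQ, aux_pKK, smul_neg, Matrix.mul_neg, Matrix.neg_mul]
    match_scalars
    all_goals try field_simp
    all_goals try rw [hs_eq]
    all_goals try ring_nf
    all_goals try simp only [hw2, hw3, hw4, hw5, hw6, hw7, hw8, hw9, hw10, hw11, hw12,
      hI2, hI3, hI4, hI5, hI6]
    all_goals try ring_nf
    all_goals try norm_num
  have hSTherm : S = Tᴴ := by
    rw [hSw, hTw]
    simp only [Matrix.conjTranspose_smul, Matrix.conjTranspose_add, aux_Dherm, aux_Qherm,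
      aux_Kherm, smul_neg, smul_smul]
    simp only [Complex.star_def, map_inv₀, _root_.map_mul, _root_.map_pow,
      Complex.conj_ofReal, Complex.conj_I]
    rw [show (starRingEnd ℂ) ω = 1 - ω from hstarω]
    match_scalars
    all_goals try field_simp
    all_goals try rw [hs_eq]
    all_goals try ring_nf
    all_goals try simp only [hw2, hw3, hw4, hw5, hw6, hw7, hw8, hw9, hw10, hw11, hw12,
      hI2, hI3, hI4, hI5, hI6]
    all_goals try ring_nf
    all_goals try norm_num
  have hRherm : Rᴴ = R := by
    rw [hRw]
    simp only [Matrix.conjTranspose_smul, Matrix.conjTranspose_add, aux_Dherm, aux_Qherm,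
      aux_Kherm, smul_neg, smul_smul]
    simp only [Complex.star_def, map_inv₀, Complex.conj_ofReal, Complex.conj_I]
    match_scalars
    all_goals try field_simp
    all_goals try rw [hs_eq]
    all_goals try ring_nf
    all_goals try simp only [hw2, hw3, hw4, hw5, hw6, hw7, hw8, hw9, hw10, hw11, hw12,
      hI2, hI3, hI4, hI5, hI6]
    all_goals try ring_nf
    all_goals try norm_num
  have key1 : (1 + R) * (1 + R) = (2:ℂ) • (1 + R) := by
    simp only [mul_add, add_mul, one_mul, mul_one, hRR]
    module
  have key2 : (1 - R) * (1 - R) = (2:ℂ) • (1 - R) := by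
    simp only [mul_sub, sub_mul, one_mul, mul_one, hRR]
    module
  have key3 : (1 + R) * (1 - R) = 0 := by
    simp only [mul_sub, sub_mul, add_mul, mul_add, one_mul, mul_one, hRR]
    abel
  have proj1 : ((2:ℂ)⁻¹ • (1 + R)) * ((2:ℂ)⁻¹ • (1 + R)) = (2:ℂ)⁻¹ • (1 + R) := by
    rw [Matrix.smul_mul, Matrix.mul_smul, key1, smul_smul, smul_smul]
    norm_num
  have proj2 : ((2:ℂ)⁻¹ • (1 - R)) * ((2:ℂ)⁻¹ • (1 - R)) = (2:ℂ)⁻¹ • (1 - R) := by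
    rw [Matrix.smul_mul, Matrix.mul_smul, key2, smul_smul, smul_smul]
    norm_num
  have proj3 : ((2:ℂ)⁻¹ • (1 + R)) * ((2:ℂ)⁻¹ • (1 - R)) = 0 := by
    rw [Matrix.smul_mul, Matrix.mul_smul, key3]
    simp
  have hherm1 : ((2:ℂ)⁻¹ • (1 + R))ᴴ = (2:ℂ)⁻¹ • (1 + R) := by
    rw [Matrix.conjTranspose_smul, Matrix.conjTranspose_add, Matrix.conjTranspose_one, hRherm]
    norm_num
  have hherm2 : ((2:ℂ)⁻¹ • (1 - R))ᴴ = (2:ℂ)⁻¹ • (1 - R) := by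
    rw [Matrix.conjTranspose_smul, Matrix.conjTranspose_sub, Matrix.conjTranspose_one, hRherm]
    norm_num
  have hsum : (2:ℂ)⁻¹ • (1 + R) + (2:ℂ)⁻¹ • (1 - R) = 1 := by
    rw [smul_add, smul_sub]
    module
  have hrankS : S.rank ≤ 3 := aux_rank_le_of_sq_zero S hSS
  have hrankT : T.rank ≤ 3 := aux_rank_le_of_sq_zero T hTT
  have hplus_le : (1 + R).rank ≤ 3 := by
    rw [← hST]
    exact le_trans (Matrix.rank_mul_le_left S T) hrankS
  have hminus_le : (1 - R).rank ≤ 3 := by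
    rw [← hTS]
    exact le_trans (Matrix.rank_mul_le_left T S) hrankT
  have hsum6 : (6:ℕ) ≤ (1 + R).rank + (1 - R).rank := by
    have h1 : ((1 + R) + (1 - R)) = (2:ℂ) • (1 : Matrix (ZMod 6) (ZMod 6) ℂ) := by module
    have h2 : ((1 + R) + (1 - R)).rank = 6 := by
      rw [h1, aux_rank_smul 2 (by norm_num) 1, Matrix.rank_one]
      rfl
    have h3 := aux_rank_add_le (1 + R) (1 - R)
    omega
  have hplus : (1 + R).rank = 3 := by omega
  have hminus : (1 - R).rank = 3 := by omega
  have hrank1 : ((2:ℂ)⁻¹ • (1 + R)).rank = 3 := by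
    rw [aux_rank_smul _ (by norm_num) _, hplus]
  have hrank2 : ((2:ℂ)⁻¹ • (1 - R)).rank = 3 := by
    rw [aux_rank_smul _ (by norm_num) _, hminus]
  exact ⟨hSTherm, hSS, hTT, hRR, hST, hTS, proj1, hherm1, proj2, hherm2, proj3, hsum, hrank1, hrank2⟩
end
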